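/- arXiv:1207.6607 — 6 statements merged into one kernel-verified Lean document; each statement's English description precedes it below -/
import Mathlib

section
/- With the flat-pricing revenue R(p) as above, if the cost coefficient η < (κ Φ_max^{1-θ})^{-1}, then R'(0+) > 0 and R'(p_max) < 0 where p_max = Φ_max^θ; consequently there exists p̂ ∈ (0, p_max) with R'(p̂) = 0. -/
/-- If η < (κ Φ_max^{1-θ})⁻¹, then R'(0) > 0 and R'(p_max) < 0, where R' is
the explicit derivative of the flat-pricing revenue; hence R' has a root
p̂ ∈ (0, p_max). -/
theorem flat_pricing_revenue_deriv_sign_change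
    (θ σ Φmax Z N κ η : ℝ)
    (hθ0 : 0 < θ) (hθ1 : θ < 1) (hσ0 : 0 < σ) (hσ1 : σ < 1)
    (hΦ : 0 < Φmax) (hZ : Z = Φmax ^ (1 - σ) / (1 - σ))
    (hN : 0 < N) (hκ0 : 0 < κ) (hκ1 : κ ≤ 1) (hη : 0 ≤ η)
    (hcost : η < (κ * Φmax ^ (1 - θ))⁻¹)
    (R' : ℝ → ℝ)
    (hR' : ∀ p : ℝ, R' p =
      N * (1 - (1 + (1 - σ) / θ) * p ^ ((1 - σ) / θ) / (Z * (1 - σ))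
        + η * κ * p ^ ((2 - σ) / θ - 1) / (Z * θ))) :
    0 < R' 0 ∧ R' (Φmax ^ θ) < 0 ∧ ∃ p ∈ Set.Ioo (0:ℝ) (Φmax ^ θ), R' p = 0 := by
  have hσ' : 0 < 1 - σ := by linarith
  have he1 : (0:ℝ) < (1 - σ) / θ := div_pos hσ' hθ0
  have he2 : (0:ℝ) < (2 - σ) / θ - 1 := by
    rw [sub_pos, lt_div_iff₀ hθ0]; linarith
  have hZ0 : 0 < Z := by
    rw [hZ]; exact div_pos (Real.rpow_pos_of_pos hΦ _) hσ'
  -- R' 0 = N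
  have h0 : R' 0 = N := by
    rw [hR', Real.zero_rpow (ne_of_gt he1), Real.zero_rpow (ne_of_gt he2)]
    ring
  have hpos : 0 < R' 0 := h0 ▸ hN
  -- key cost bound
  have hΦθ : (0:ℝ) < Φmax ^ (1 - θ) := Real.rpow_pos_of_pos hΦ _
  have hc : 0 < κ * Φmax ^ (1 - θ) := mul_pos hκ0 hΦθ
  have hkey : η * (κ * Φmax ^ (1 - θ)) < 1 := by
    have h := mul_lt_mul_of_pos_right hcost hc
    rwa [inv_mul_cancel₀ (ne_of_gt hc)] at h
  -- rpow identities at p_max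
  have hA : (Φmax ^ θ) ^ ((1 - σ) / θ) = Φmax ^ (1 - σ) := by
    rw [← Real.rpow_mul hΦ.le]; congr 1; field_simp
  have hB : (Φmax ^ θ) ^ ((2 - σ) / θ - 1) = Φmax ^ (1 - σ) * Φmax ^ (1 - θ) := by
    rw [← Real.rpow_mul hΦ.le, ← Real.rpow_add hΦ]; congr 1; field_simp; ring
  have hcσ : (0:ℝ) < Φmax ^ (1 - σ) := Real.rpow_pos_of_pos hΦ _
  have hneg : R' (Φmax ^ θ) < 0 := by
    rw [hR', hA, hB, hZ]
    have halg : 1 - (1 + (1 - σ) / θ) * Φmax ^ (1 - σ) /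
          (Φmax ^ (1 - σ) / (1 - σ) * (1 - σ))
        + η * κ * (Φmax ^ (1 - σ) * Φmax ^ (1 - θ)) /
          (Φmax ^ (1 - σ) / (1 - σ) * θ)
        = ((1 - σ) / θ) * (η * (κ * Φmax ^ (1 - θ)) - 1) := by
      field_simp
      ring
    rw [halg]
    exact mul_neg_of_pos_of_neg hN
      (mul_neg_of_pos_of_neg he1 (by linarith))
  refine ⟨hpos, hneg, ?_⟩
  -- continuity
  have c1 : Continuous fun p : ℝ => p ^ ((1 - σ) / θ) :=
    continuous_iff_continuousAt.mpr fun x =>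
      Real.continuousAt_rpow_const x _ (Or.inr he1.le)
  have c2 : Continuous fun p : ℝ => p ^ ((2 - σ) / θ - 1) :=
    continuous_iff_continuousAt.mpr fun x =>
      Real.continuousAt_rpow_const x _ (Or.inr he2.le)
  have cf : Continuous R' := by
    have : R' = fun p => N * (1 - (1 + (1 - σ) / θ) * p ^ ((1 - σ) / θ) / (Z * (1 - σ))
        + η * κ * p ^ ((2 - σ) / θ - 1) / (Z * θ)) := funext hR'
    rw [this]
    exact continuous_const.mul
      (((continuous_const.sub ((continuous_const.mul c1).div_const _)).add
        ((continuous_const.mul c2).div_const _)))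
  have hle : (0:ℝ) ≤ Φmax ^ θ := (Real.rpow_pos_of_pos hΦ θ).le
  have := intermediate_value_Ioo' hle cf.continuousOn (a := 0) (b := Φmax ^ θ)
  obtain ⟨p, hp, hp0⟩ := this ⟨hneg, hpos⟩
  exact ⟨p, hp, hp0⟩
end

section
/- The second derivative of the flat-pricing revenue is R''(p) = N̂ p^{(1-σ-θ)/θ} [ ηκ p^{(1-θ)/θ}(2−θ−σ) − (1+θ−σ) ] / (Zθ²). Hence R is concave on [0, p̄) and convex on (p̄, p_max), where p̄ = ((1+θ−σ)/(ηκ(2−θ−σ)))^{θ/(1-θ)}. -/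
/-!
Differentiating the revenue twice on `p > 0` gives `R''(p) = N p^{(1-σ-θ)/θ} q(p) / (Z θ²)`
with `q(p) = η κ (2-θ-σ) p^{(1-θ)/θ} - (1+θ-σ)`. Since `(1-θ)/θ > 0`, `q` is strictly increasing
and changes sign exactly at `p̄`; the prefactor is positive, so `R'' ≤ 0` below `p̄` and
`R'' ≥ 0` above it. The revenue is continuous up to `p = 0` because all its exponents are
nonnegative, which gives concavity on the half-closed interval `[0, p̄)`.
-/

open Set

theorem mul_rpow_sub_neg_iff {c d e x : ℝ} (hc : 0 < c) (hd : 0 ≤ d) (he : 0 < e) (hx : 0 ≤ x) :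
    c * x ^ e - d < 0 ↔ x < (d / c) ^ e⁻¹ := by
  rw [Real.lt_rpow_inv_iff_of_pos hx (div_nonneg hd hc.le) he, lt_div_iff₀ hc, sub_neg, mul_comm]

namespace FlatPricing

noncomputable section

variable (θ σ Φmax Z N κ η : ℝ)

def revenue (p : ℝ) : ℝ :=
  N * (p * (1 - p ^ ((1 - σ) / θ) / (Z * (1 - σ)))
    - η * κ * (Φmax ^ (2 - σ) - p ^ ((2 - σ) / θ)) / (Z * (2 - σ)))

def revenueDeriv (p : ℝ) : ℝ :=
  N * (1 - (1 + (1 - σ) / θ) * p ^ ((1 - σ) / θ) / (Z * (1 - σ))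
    + η * κ * p ^ ((2 - σ) / θ - 1) / (Z * θ))

def revenueDeriv2 (p : ℝ) : ℝ :=
  N * p ^ ((1 - σ - θ) / θ) *
    ((η * κ * p ^ ((1 - θ) / θ) * (2 - θ - σ) - (1 + θ - σ)) / (Z * θ ^ 2))

def inflectionPrice : ℝ :=
  ((1 + θ - σ) / (η * κ * (2 - θ - σ))) ^ (θ / (1 - θ))

end

variable {θ σ Φmax Z N κ η : ℝ}

theorem continuous_revenue (hθ : 0 < θ) (hσ : σ < 1) :
    Continuous (revenue θ σ Φmax Z N κ η) := by
  have h₁ := Real.continuous_rpow_const (q := (1 - σ) / θ) (by bound)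
  have h₂ := Real.continuous_rpow_const (q := (2 - σ) / θ) (by bound)
  unfold revenue
  fun_prop

theorem hasDerivAt_revenue (hθ : θ ≠ 0) (hσ₁ : σ ≠ 1) (hσ₂ : σ ≠ 2) {p : ℝ} (hp : 0 < p) :
    HasDerivAt (revenue θ σ Φmax Z N κ η) (revenueDeriv θ σ Z N κ η p) p := by
  have ha := Real.hasDerivAt_rpow_const (p := (1 - σ) / θ) (Or.inl hp.ne')
  have hb := Real.hasDerivAt_rpow_const (p := (2 - σ) / θ) (Or.inl hp.ne')
  unfold revenue
  refine HasDerivAt.congr_deriv ((((hasDerivAt_id' p).mul ((ha.div_const _).const_sub 1)).sub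
    (((hb.const_sub _).const_mul (η * κ)).div_const _)).const_mul N) ?_
  have hσ₁' : 1 - σ ≠ 0 := sub_ne_zero.mpr (Ne.symm hσ₁)
  have hσ₂' : 2 - σ ≠ 0 := sub_ne_zero.mpr (Ne.symm hσ₂)
  rw [revenueDeriv, Real.rpow_sub_one hp.ne', Real.rpow_sub_one hp.ne']
  have hp₀ := hp.ne'
  field_simp
  ring

theorem hasDerivAt_revenueDeriv (hθ : θ ≠ 0) (hσ : σ ≠ 1) {p : ℝ} (hp : 0 < p) :
    HasDerivAt (revenueDeriv θ σ Z N κ η) (revenueDeriv2 θ σ Z N κ η p) p := by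
  have ha := Real.hasDerivAt_rpow_const (p := (1 - σ) / θ) (Or.inl hp.ne')
  have hb := Real.hasDerivAt_rpow_const (p := (2 - σ) / θ - 1) (Or.inl hp.ne')
  unfold revenueDeriv
  refine HasDerivAt.congr_deriv (((((ha.const_mul _).div_const _).const_sub 1).add
    ((hb.const_mul (η * κ)).div_const _)).const_mul N) ?_
  have hσ' : 1 - σ ≠ 0 := sub_ne_zero.mpr (Ne.symm hσ)
  have e₁ : (1 - σ) / θ - 1 = (1 - σ - θ) / θ := by field_simp
  have e₂ : (2 - σ) / θ - 1 - 1 = (1 - σ - θ) / θ + (1 - θ) / θ := by field_simp; ring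
  rw [revenueDeriv2, e₁, e₂, Real.rpow_add hp]
  field_simp
  ring

theorem sub_neg_iff_lt_inflectionPrice (hθ₀ : 0 < θ) (hθ₁ : θ < 1) (hσ : σ < 1)
    (hκ : 0 < κ) (hη : 0 < η) {p : ℝ} (hp : 0 ≤ p) :
    η * κ * p ^ ((1 - θ) / θ) * (2 - θ - σ) - (1 + θ - σ) < 0 ↔
      p < inflectionPrice θ σ κ η := by
  rw [inflectionPrice, ← inv_div (1 - θ) θ, ← mul_rpow_sub_neg_iff (by nlinarith [mul_pos hη hκ])
    (by linarith) (div_pos (by linarith) hθ₀) hp]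
  ring_nf

theorem revenueDeriv2_nonpos (hθ₀ : 0 < θ) (hθ₁ : θ < 1) (hσ : σ < 1) (hZ : 0 ≤ Z) (hN : 0 ≤ N)
    (hκ : 0 < κ) (hη : 0 < η) {p : ℝ} (hp : 0 < p) (hpb : p < inflectionPrice θ σ κ η) :
    revenueDeriv2 θ σ Z N κ η p ≤ 0 :=
  mul_nonpos_of_nonneg_of_nonpos (by positivity) <| div_nonpos_of_nonpos_of_nonneg
    ((sub_neg_iff_lt_inflectionPrice hθ₀ hθ₁ hσ hκ hη hp.le).mpr hpb).le (by positivity)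

theorem revenueDeriv2_nonneg (hθ₀ : 0 < θ) (hθ₁ : θ < 1) (hσ : σ < 1) (hZ : 0 ≤ Z) (hN : 0 ≤ N)
    (hκ : 0 < κ) (hη : 0 < η) {p : ℝ} (hp : 0 < p) (hpb : inflectionPrice θ σ κ η < p) :
    0 ≤ revenueDeriv2 θ σ Z N κ η p :=
  mul_nonneg (by positivity) <| div_nonneg
    (not_lt.mp <| mt (sub_neg_iff_lt_inflectionPrice hθ₀ hθ₁ hσ hκ hη hp.le).mp hpb.not_gt)
    (by positivity)

end FlatPricing

open FlatPricing

theorem flat_pricing_revenue_second_deriv_general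
    (θ σ Φmax Z N κ η : ℝ)
    (hθ0 : 0 < θ) (hθ1 : θ < 1) (hσ1 : σ < 1)
    (hΦ : 0 < Φmax) (hZ : Z = Φmax ^ (1 - σ) / (1 - σ))
    (hN : 0 < N) (hκ0 : 0 < κ) (hη : 0 < η)
    (R R' : ℝ → ℝ)
    (hR : ∀ p : ℝ, R p =
      N * (p * (1 - p ^ ((1 - σ) / θ) / (Z * (1 - σ)))
        - η * κ * (Φmax ^ (2 - σ) - p ^ ((2 - σ) / θ)) / (Z * (2 - σ))))
    (hR' : ∀ p : ℝ, R' p =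
      N * (1 - (1 + (1 - σ) / θ) * p ^ ((1 - σ) / θ) / (Z * (1 - σ))
        + η * κ * p ^ ((2 - σ) / θ - 1) / (Z * θ))) :
    (∀ p ∈ Set.Ioo (0:ℝ) (Φmax ^ θ),
      HasDerivAt R'
        (N * p ^ ((1 - σ - θ) / θ) *
          ((η * κ * p ^ ((1 - θ) / θ) * (2 - θ - σ) - (1 + θ - σ)) / (Z * θ ^ 2))) p) ∧
    ConcaveOn ℝ (Set.Ico (0:ℝ) (((1 + θ - σ) / (η * κ * (2 - θ - σ))) ^ (θ / (1 - θ)))) R ∧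
    ConvexOn ℝ (Set.Ioo (((1 + θ - σ) / (η * κ * (2 - θ - σ))) ^ (θ / (1 - θ))) (Φmax ^ θ)) R := by
  obtain rfl : R = revenue θ σ Φmax Z N κ η := funext hR
  obtain rfl : R' = revenueDeriv θ σ Z N κ η := funext hR'
  have hZ₀ : 0 ≤ Z := hZ ▸ div_nonneg (Real.rpow_nonneg hΦ.le _) (by linarith)
  have hpb : 0 ≤ inflectionPrice θ σ κ η := Real.rpow_nonneg (by bound) _
  have hR₁ {p : ℝ} (hp : 0 < p) :
      HasDerivAt (revenue θ σ Φmax Z N κ η) (revenueDeriv θ σ Z N κ η p) p :=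
    hasDerivAt_revenue hθ0.ne' hσ1.ne (by linarith) hp
  have hR₂ {p : ℝ} (hp : 0 < p) :
      HasDerivAt (revenueDeriv θ σ Z N κ η) (revenueDeriv2 θ σ Z N κ η p) p :=
    hasDerivAt_revenueDeriv hθ0.ne' hσ1.ne hp
  refine ⟨fun p hp => hR₂ hp.1, ?_, ?_⟩
  · refine concaveOn_of_hasDerivWithinAt2_nonpos (f' := revenueDeriv θ σ Z N κ η)
      (f'' := revenueDeriv2 θ σ Z N κ η) (convex_Ico _ _)
      (continuous_revenue hθ0 hσ1).continuousOn (fun x hx => ?_) (fun x hx => ?_) (fun x hx => ?_)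
      <;> rw [interior_Ico] at hx
    · exact (hR₁ hx.1).hasDerivWithinAt
    · exact (hR₂ hx.1).hasDerivWithinAt
    · exact revenueDeriv2_nonpos hθ0 hθ1 hσ1 hZ₀ hN.le hκ0 hη hx.1 hx.2
  · refine convexOn_of_hasDerivWithinAt2_nonneg (f' := revenueDeriv θ σ Z N κ η)
      (f'' := revenueDeriv2 θ σ Z N κ η) (convex_Ioo _ _)
      (continuous_revenue hθ0 hσ1).continuousOn (fun x hx => ?_) (fun x hx => ?_) (fun x hx => ?_)
      <;> rw [interior_Ioo] at hx
    · exact (hR₁ (hpb.trans_lt hx.1)).hasDerivWithinAt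
    · exact (hR₂ (hpb.trans_lt hx.1)).hasDerivWithinAt
    · exact revenueDeriv2_nonneg hθ0 hθ1 hσ1 hZ₀ hN.le hκ0 hη (hpb.trans_lt hx.1) hx.1

/-- Second derivative of the flat-pricing revenue, and the resulting
concavity on [0, p̄) and convexity on (p̄, p_max). -/
theorem flat_pricing_revenue_second_deriv
    (θ σ Φmax Z N κ η : ℝ)
    (hθ0 : 0 < θ) (hθ1 : θ < 1) (hσ0 : 0 < σ) (hσ1 : σ < 1)
    (hΦ : 0 < Φmax) (hZ : Z = Φmax ^ (1 - σ) / (1 - σ))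
    (hN : 0 < N) (hκ0 : 0 < κ) (hκ1 : κ ≤ 1) (hη : 0 < η)
    (R R' : ℝ → ℝ)
    (hR : ∀ p : ℝ, R p =
      N * (p * (1 - p ^ ((1 - σ) / θ) / (Z * (1 - σ)))
        - η * κ * (Φmax ^ (2 - σ) - p ^ ((2 - σ) / θ)) / (Z * (2 - σ))))
    (hR' : ∀ p : ℝ, R' p =
      N * (1 - (1 + (1 - σ) / θ) * p ^ ((1 - σ) / θ) / (Z * (1 - σ))
        + η * κ * p ^ ((2 - σ) / θ - 1) / (Z * θ))) :
    (∀ p ∈ Set.Ioo (0:ℝ) (Φmax ^ θ),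
      HasDerivAt R'
        (N * p ^ ((1 - σ - θ) / θ) *
          ((η * κ * p ^ ((1 - θ) / θ) * (2 - θ - σ) - (1 + θ - σ)) / (Z * θ ^ 2))) p) ∧
    ConcaveOn ℝ (Set.Ico (0:ℝ) (((1 + θ - σ) / (η * κ * (2 - θ - σ))) ^ (θ / (1 - θ)))) R ∧
    ConvexOn ℝ (Set.Ioo (((1 + θ - σ) / (η * κ * (2 - θ - σ))) ^ (θ / (1 - θ))) (Φmax ^ θ)) R :=
  flat_pricing_revenue_second_deriv_general θ σ Φmax Z N κ η hθ0 hθ1 hσ1 hΦ hZ hN hκ0 hη R R' hR hR'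
end

section
/- If η < (κ Φ_max^{1-θ})^{-1}, then the flat-pricing revenue R(p) is unimodal on [0, Φ_max^θ): R' has exactly one sign change, from positive to negative, at a unique critical point p̂ ∈ (0, p̄) where p̄ = ((1+θ−σ)/(ηκ(2−θ−σ)))^{θ/(1-θ)}. -/
/-!
Write `R' = N g` with `g p = 1 - A p^a + B p^(a+c)`, where `a = (1 - σ)/θ`, `c = (1 - θ)/θ`
and `A, B > 0`. Then `g' p = p^(a-1) ((a+c) B p^c - a A)`, so `g` strictly decreases up to the
point `p̄` with `(a+c) B p̄^c = a A` and strictly increases after it. Since `g 0 = 1` and the cost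
condition makes `g (Φ_max^θ) = a (η κ Φ_max^(1-θ) - 1) < 0`, `g` has a single zero in
`(0, Φ_max^θ)`, it lies below `p̄`, and `g` changes sign there from `+` to `-`.
-/

open Set Real

theorem exists_sign_change_of_strictAntiOn_of_strictMonoOn {g : ℝ → ℝ} {m P : ℝ}
    (hm : 0 < m) (hP : 0 < P) (hcont : ContinuousOn g (Icc 0 P))
    (hanti : StrictAntiOn g (Icc 0 m)) (hmono : StrictMonoOn g (Ici m))
    (hg0 : 0 < g 0) (hgP : g P < 0) :
    ∃ x ∈ Ioo 0 (min m P), g x = 0 ∧ (∀ p ∈ Ioo 0 x, 0 < g p) ∧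
      (∀ p ∈ Ioo x P, g p < 0) ∧ ∀ p ∈ Ioo 0 P, g p = 0 → p = x := by
  have hgq : g (min m P) < 0 := by
    rcases le_total m P with hmP | hPm
    · rw [min_eq_left hmP]
      exact (hmono.monotoneOn self_mem_Ici hmP hmP).trans_lt hgP
    · rwa [min_eq_right hPm]
  obtain ⟨x, hx, hgx⟩ : (0 : ℝ) ∈ g '' Ioo 0 (min m P) :=
    intermediate_value_Ioo' (le_min hm.le hP.le)
      (hcont.mono (Icc_subset_Icc_right (min_le_right _ _))) ⟨hgq, hg0⟩
  have hxm : x < m := hx.2.trans_le (min_le_left _ _)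
  have hpos : ∀ p ∈ Ioo 0 x, 0 < g p := fun p hp =>
    hgx ▸ hanti ⟨hp.1.le, (hp.2.trans hxm).le⟩ ⟨hx.1.le, hxm.le⟩ hp.2
  have hneg : ∀ p ∈ Ioo x P, g p < 0 := by
    intro p hp
    rcases le_or_gt p m with hpm | hmp
    · exact hgx ▸ hanti ⟨hx.1.le, hxm.le⟩ ⟨(hx.1.trans hp.1).le, hpm⟩ hp.1
    · exact (hmono hmp.le (hmp.trans hp.2).le hp.2).trans hgP
  refine ⟨x, hx, hgx, hpos, hneg, fun p hp hgp => ?_⟩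
  rcases lt_trichotomy p x with hpx | rfl | hxp
  · exact absurd hgp (hpos p ⟨hp.1, hpx⟩).ne'
  · rfl
  · exact absurd hgp (hneg p ⟨hxp, hp.2⟩).ne

section OneSubRpowAddRpow

variable {A B a c : ℝ}

theorem hasDerivAt_one_sub_rpow_add_rpow {x : ℝ} (hx : 0 < x) :
    HasDerivAt (fun x => 1 - A * x ^ a + B * x ^ (a + c))
      (x ^ (a - 1) * ((a + c) * B * x ^ c - a * A)) x := by
  have hsub := (hasDerivAt_rpow_const (p := a) (Or.inl hx.ne')).const_mul A
  have hadd := (hasDerivAt_rpow_const (p := a + c) (Or.inl hx.ne')).const_mul B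
  refine (((hasDerivAt_const x (1 : ℝ)).sub hsub).add hadd).congr_deriv ?_
  rw [add_sub_right_comm, rpow_add hx]
  ring

theorem continuous_one_sub_rpow_add_rpow (ha : 0 ≤ a) (hc : 0 ≤ c) :
    Continuous fun x : ℝ => 1 - A * x ^ a + B * x ^ (a + c) := by
  fun_prop (disch := positivity)

theorem strictAntiOn_one_sub_rpow_add_rpow {m : ℝ} (ha : 0 ≤ a) (hc : 0 < c) (hB : 0 < B)
    (hm : (a + c) * B * m ^ c = a * A) :
    StrictAntiOn (fun x => 1 - A * x ^ a + B * x ^ (a + c)) (Icc 0 m) := by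
  refine strictAntiOn_of_deriv_neg (convex_Icc 0 m)
    (continuous_one_sub_rpow_add_rpow ha hc.le).continuousOn fun x hx => ?_
  rw [interior_Icc] at hx
  have hxm : x ^ c < m ^ c := rpow_lt_rpow hx.1.le hx.2 hc
  have hcB : 0 < (a + c) * B := mul_pos (by linarith) hB
  rw [(hasDerivAt_one_sub_rpow_add_rpow hx.1).deriv, ← hm]
  exact mul_neg_of_pos_of_neg (rpow_pos_of_pos hx.1 _) (by nlinarith)

theorem strictMonoOn_one_sub_rpow_add_rpow {m : ℝ} (ha : 0 ≤ a) (hc : 0 < c) (hB : 0 < B)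
    (hm₀ : 0 ≤ m) (hm : (a + c) * B * m ^ c = a * A) :
    StrictMonoOn (fun x => 1 - A * x ^ a + B * x ^ (a + c)) (Ici m) := by
  refine strictMonoOn_of_deriv_pos (convex_Ici m)
    (continuous_one_sub_rpow_add_rpow ha hc.le).continuousOn fun x hx => ?_
  rw [interior_Ici] at hx
  have hx₀ : 0 < x := hm₀.trans_lt hx
  have hmx : m ^ c < x ^ c := rpow_lt_rpow hm₀ hx hc
  have hcB : 0 < (a + c) * B := mul_pos (by linarith) hB
  rw [(hasDerivAt_one_sub_rpow_add_rpow hx₀).deriv, ← hm]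
  exact mul_pos (rpow_pos_of_pos hx₀ _) (by nlinarith)

end OneSubRpowAddRpow

section FlatPricing

variable {θ σ Φmax Z η κ : ℝ}

variable (θ σ Z η κ) in
/-- The marginal revenue `R' / N`, with the exponent `(2 - σ) / θ - 1` split as
`(1 - σ) / θ + (1 - θ) / θ`. -/
noncomputable def flatPricingSlope (p : ℝ) : ℝ :=
  1 - (1 + (1 - σ) / θ) / (Z * (1 - σ)) * p ^ ((1 - σ) / θ) +
    η * κ / (Z * θ) * p ^ ((1 - σ) / θ + (1 - θ) / θ)

theorem flatPricing_critical_point (hθ0 : 0 < θ) (hθ1 : θ < 1) (hσ1 : σ < 1) (hZ : Z ≠ 0)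
    (hη : 0 < η) (hκ : 0 < κ) :
    ((1 - σ) / θ + (1 - θ) / θ) * (η * κ / (Z * θ)) *
        (((1 + θ - σ) / (η * κ * (2 - θ - σ))) ^ (θ / (1 - θ))) ^ ((1 - θ) / θ) =
      (1 - σ) / θ * ((1 + (1 - σ) / θ) / (Z * (1 - σ))) := by
  have h2θσ : 0 < 2 - θ - σ := by linarith
  have hK : 0 ≤ (1 + θ - σ) / (η * κ * (2 - θ - σ)) := by
    apply div_nonneg <;> [linarith; positivity]
  have hexp : θ / (1 - θ) * ((1 - θ) / θ) = 1 := by field_simp [show 1 - θ ≠ 0 by linarith]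
  rw [← rpow_mul hK, hexp, rpow_one]
  have : 1 - σ ≠ 0 := by linarith
  field_simp
  ring

theorem flatPricingSlope_rpow_theta (hθ0 : 0 < θ) (hσ1 : σ < 1) (hΦ : 0 < Φmax)
    (hZ : Z = Φmax ^ (1 - σ) / (1 - σ)) :
    flatPricingSlope θ σ Z η κ (Φmax ^ θ) =
      (1 - σ) / θ * (η * κ * Φmax ^ (1 - θ) - 1) := by
  rw [flatPricingSlope, ← rpow_mul hΦ.le, ← rpow_mul hΦ.le, mul_div_cancel₀ _ hθ0.ne',
    ← add_div, mul_div_cancel₀ _ hθ0.ne', rpow_add hΦ, hZ]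
  have : 0 < Φmax ^ (1 - σ) := by positivity
  have : 0 < 1 - σ := by linarith
  field_simp
  ring

end FlatPricing

theorem flat_pricing_revenue_unimodal_general
    (θ σ Φmax Z N κ η : ℝ)
    (hθ0 : 0 < θ) (hθ1 : θ < 1) (hσ1 : σ < 1)
    (hΦ : 0 < Φmax) (hZ : Z = Φmax ^ (1 - σ) / (1 - σ))
    (hN : 0 < N) (hκ0 : 0 < κ) (hη : 0 < η)
    (hcost : η < (κ * Φmax ^ (1 - θ))⁻¹)
    (R' : ℝ → ℝ)
    (hR' : ∀ p : ℝ, R' p =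
      N * (1 - (1 + (1 - σ) / θ) * p ^ ((1 - σ) / θ) / (Z * (1 - σ))
        + η * κ * p ^ ((2 - σ) / θ - 1) / (Z * θ))) :
    ∃ phat ∈ Set.Ioo (0:ℝ) (((1 + θ - σ) / (η * κ * (2 - θ - σ))) ^ (θ / (1 - θ))),
      R' phat = 0 ∧
      (∀ p ∈ Set.Ioo (0:ℝ) phat, 0 < R' p) ∧
      (∀ p ∈ Set.Ioo phat (Φmax ^ θ), R' p < 0) ∧
      (∀ p ∈ Set.Ioo (0:ℝ) (Φmax ^ θ), R' p = 0 → p = phat) := by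
  have hR : ∀ p, R' p = N * flatPricingSlope θ σ Z η κ p := fun p => by
    rw [hR' p, flatPricingSlope, show (2 - σ) / θ - 1 = (1 - σ) / θ + (1 - θ) / θ by
      field_simp; ring]
    ring
  have ha : 0 < (1 - σ) / θ := div_pos (by linarith) hθ0
  have hc : 0 < (1 - θ) / θ := div_pos (by linarith) hθ0
  have hZ0 : 0 < Z := by rw [hZ]; have := sub_pos.2 hσ1; positivity
  have hB : 0 < η * κ / (Z * θ) := by positivity
  have hpbar : 0 < ((1 + θ - σ) / (η * κ * (2 - θ - σ))) ^ (θ / (1 - θ)) :=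
    rpow_pos_of_pos (div_pos (by linarith) (mul_pos (by positivity) (by linarith))) _
  have hcrit := flatPricing_critical_point hθ0 hθ1 hσ1 hZ0.ne' hη hκ0
  have hg0 : 0 < flatPricingSlope θ σ Z η κ 0 := by
    simp [flatPricingSlope, zero_rpow ha.ne', zero_rpow (add_pos ha hc).ne']
  have hgP : flatPricingSlope θ σ Z η κ (Φmax ^ θ) < 0 := by
    rw [← mul_one (κ * _)⁻¹, lt_inv_mul_iff₀' (by positivity)] at hcost
    rw [flatPricingSlope_rpow_theta hθ0 hσ1 hΦ hZ]
    exact mul_neg_of_pos_of_neg ha (by linarith)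
  obtain ⟨x, hx, hgx, hpos, hneg, huniq⟩ := exists_sign_change_of_strictAntiOn_of_strictMonoOn
    (g := flatPricingSlope θ σ Z η κ) hpbar (rpow_pos_of_pos hΦ θ)
    (continuous_one_sub_rpow_add_rpow ha.le hc.le).continuousOn
    (strictAntiOn_one_sub_rpow_add_rpow ha.le hc hB hcrit)
    (strictMonoOn_one_sub_rpow_add_rpow ha.le hc hB hpbar.le hcrit) hg0 hgP
  refine ⟨x, ⟨hx.1, hx.2.trans_le (min_le_left _ _)⟩, ?_, ?_, ?_, ?_⟩ <;> simp only [hR]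
  · rw [hgx, mul_zero]
  · exact fun p hp => mul_pos hN (hpos p hp)
  · exact fun p hp => mul_neg_of_pos_of_neg hN (hneg p hp)
  · exact fun p hp h => huniq p hp ((mul_eq_zero.1 h).resolve_left hN.ne')

/-- If η < (κ Φ_max^{1-θ})⁻¹, the flat-pricing revenue is unimodal on
[0, Φ_max^θ): its derivative R' has a unique root p̂ ∈ (0, p̄), is positive
below p̂ and negative above p̂. -/
theorem flat_pricing_revenue_unimodal
    (θ σ Φmax Z N κ η : ℝ)
    (hθ0 : 0 < θ) (hθ1 : θ < 1) (hσ0 : 0 < σ) (hσ1 : σ < 1)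
    (hΦ : 0 < Φmax) (hZ : Z = Φmax ^ (1 - σ) / (1 - σ))
    (hN : 0 < N) (hκ0 : 0 < κ) (hκ1 : κ ≤ 1) (hη : 0 < η)
    (hcost : η < (κ * Φmax ^ (1 - θ))⁻¹)
    (R' : ℝ → ℝ)
    (hR' : ∀ p : ℝ, R' p =
      N * (1 - (1 + (1 - σ) / θ) * p ^ ((1 - σ) / θ) / (Z * (1 - σ))
        + η * κ * p ^ ((2 - σ) / θ - 1) / (Z * θ))) :
    ∃ phat ∈ Set.Ioo (0:ℝ) (((1 + θ - σ) / (η * κ * (2 - θ - σ))) ^ (θ / (1 - θ))),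
      R' phat = 0 ∧
      (∀ p ∈ Set.Ioo (0:ℝ) phat, 0 < R' p) ∧
      (∀ p ∈ Set.Ioo phat (Φmax ^ θ), R' p < 0) ∧
      (∀ p ∈ Set.Ioo (0:ℝ) (Φmax ^ θ), R' p = 0 → p = phat) :=
  flat_pricing_revenue_unimodal_general θ σ Φmax Z N κ η hθ0 hθ1 hσ1 hΦ hZ hN hκ0 hη hcost R' hR'
end

section
/- Let θ, σ ∈ (0,1) and define Ψ(π) = (θ/π)^{1/(1-θ)} for π > 0, and the per-cell total traffic V(π) = N̂ Ψ(π)(1 − Ψ(π)^{1-σ}/((2-σ)Φ_max^{1-σ})) when Ψ(π) ≤ Φ_max. Then V'(π) = −N̂ Ψ(π)/(π(1-θ)) · (1 − Ψ(π)^{1-σ}/Φ_max^{1-σ}) ≤ 0, with strict inequality when Ψ(π) < Φ_max; hence V is nonincreasing in π. -/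
/-!
With `Ψ(π) = (θ/π)^{1/(1-θ)}` one has `Ψ' = -Ψ/(π(1-θ))`, and the map
`y ↦ y (1 - y^{1-σ}/((2-σ)M))` has derivative `1 - y^{1-σ}/M`, so the chain rule gives `V'`.
For `Ψ ≤ Φ_max` the second factor is nonnegative while the first is negative. Since `Ψ` is
decreasing, the regime `Ψ(π) ≤ Φ_max` is an interval of prices, on which `V' ≤ 0` makes `V`
antitone.
-/

open Set

theorem hasDerivAt_div_rpow {c x : ℝ} (p : ℝ) (hc : c ≠ 0) (hx : x ≠ 0) :
    HasDerivAt (fun x => (c / x) ^ p) (-(p * (c / x) ^ p / x)) x := by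
  have hcx : c / x ≠ 0 := div_ne_zero hc hx
  have hdiv : HasDerivAt (fun x => c / x) (-(c / x ^ 2)) x := by
    simpa only [div_eq_mul_inv, mul_neg] using (hasDerivAt_inv hx).const_mul c
  convert hdiv.rpow_const (p := p) (Or.inl hcx) using 1
  rw [Real.rpow_sub_one hcx]
  field_simp

theorem antitoneOn_div_rpow {c p : ℝ} (hc : 0 ≤ c) (hp : 0 ≤ p) :
    AntitoneOn (fun x => (c / x) ^ p) (Ioi 0) := fun _ ha _ hb hab =>
  Real.rpow_le_rpow (div_nonneg hc (le_of_lt hb)) (div_le_div_of_nonneg_left hc ha hab) hp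

theorem HasDerivAt.mul_one_sub_rpow_div {f : ℝ → ℝ} {f' x : ℝ} (N : ℝ) {σ M : ℝ}
    (hf : HasDerivAt f f' x) (hfx : f x ≠ 0) (hσ : σ ≠ 2) (hM : M ≠ 0) :
    HasDerivAt (fun x => N * f x * (1 - f x ^ (1 - σ) / ((2 - σ) * M)))
      (N * f' * (1 - f x ^ (1 - σ) / M)) x := by
  have h2σ : 2 - σ ≠ 0 := sub_ne_zero.2 (Ne.symm hσ)
  have hpow := (hf.rpow_const (p := 1 - σ) (Or.inl hfx)).div_const ((2 - σ) * M)
  refine ((hf.const_mul N).mul (hpow.const_sub 1)).congr_deriv ?_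
  rw [Real.rpow_sub_one hfx]
  field_simp
  ring

theorem one_sub_rpow_div_rpow_nonneg {y M q : ℝ} (hy : 0 ≤ y) (hyM : y ≤ M) (hq : 0 ≤ q) :
    0 ≤ 1 - y ^ q / M ^ q := by
  have hM : 0 ≤ M := hy.trans hyM
  rw [← Real.div_rpow hy hM, sub_nonneg]
  exact Real.rpow_le_one (div_nonneg hy hM) (div_le_one_of_le₀ hyM hM) hq

theorem one_sub_rpow_div_rpow_pos {y M q : ℝ} (hy : 0 ≤ y) (hyM : y < M) (hq : 0 < q) :
    0 < 1 - y ^ q / M ^ q := by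
  have hM : 0 < M := hy.trans_lt hyM
  rw [← Real.div_rpow hy hM.le, sub_pos]
  exact Real.rpow_lt_one (div_nonneg hy hM.le) ((div_lt_one hM).2 hyM) hq

theorem Set.OrdConnected.sep_le_of_antitoneOn {α β : Type*} [Preorder α] [Preorder β]
    {s : Set α} {f : α → β} (hs : s.OrdConnected) (hf : AntitoneOn f s) (c : β) :
    {x | x ∈ s ∧ f x ≤ c}.OrdConnected :=
  ⟨fun _ hx _ hy _ hz =>
    ⟨hs.out hx.1 hy.1 hz, (hf hx.1 (hs.out hx.1 hy.1 hz) hz.1).trans hx.2⟩⟩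

theorem Convex.antitoneOn_of_hasDerivAt_nonpos {D : Set ℝ} (hD : Convex ℝ D) {f f' : ℝ → ℝ}
    (hf : ∀ x ∈ D, HasDerivAt f (f' x) x) (hf' : ∀ x ∈ D, f' x ≤ 0) : AntitoneOn f D :=
  antitoneOn_of_hasDerivWithinAt_nonpos hD (fun x hx => (hf x hx).continuousAt.continuousWithinAt)
    (fun x hx => (hf x (interior_subset hx)).hasDerivWithinAt)
    (fun x hx => hf' x (interior_subset hx))

theorem volume_pricing_traffic_deriv_general
    (θ σ Φmax N : ℝ)
    (hθ0 : 0 < θ) (hθ1 : θ < 1) (hσ1 : σ < 1)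
    (hΦ : 0 < Φmax) (hN : 0 < N)
    (Ψ V : ℝ → ℝ)
    (hΨ : ∀ π : ℝ, Ψ π = (θ / π) ^ (1 / (1 - θ)))
    (hV : ∀ π : ℝ, V π = N * Ψ π * (1 - (Ψ π) ^ (1 - σ) / ((2 - σ) * Φmax ^ (1 - σ)))) :
    (∀ π : ℝ, 0 < π → Ψ π ≤ Φmax →
      HasDerivAt V (-(N * Ψ π) / (π * (1 - θ)) * (1 - (Ψ π) ^ (1 - σ) / Φmax ^ (1 - σ))) π ∧
      -(N * Ψ π) / (π * (1 - θ)) * (1 - (Ψ π) ^ (1 - σ) / Φmax ^ (1 - σ)) ≤ 0 ∧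
      (Ψ π < Φmax →
        -(N * Ψ π) / (π * (1 - θ)) * (1 - (Ψ π) ^ (1 - σ) / Φmax ^ (1 - σ)) < 0)) ∧
    AntitoneOn V {π : ℝ | 0 < π ∧ Ψ π ≤ Φmax} := by
  have h1θ : 0 < 1 - θ := sub_pos.2 hθ1
  have hΨpos : ∀ π : ℝ, 0 < π → 0 < Ψ π := fun π hπ =>
    hΨ π ▸ Real.rpow_pos_of_pos (div_pos hθ0 hπ) _
  have hΨ' : ∀ π : ℝ, 0 < π → HasDerivAt Ψ (-(1 / (1 - θ) * Ψ π / π)) π := fun π hπ => by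
    rw [funext hΨ]
    exact hasDerivAt_div_rpow _ hθ0.ne' hπ.ne'
  have hV' : ∀ π : ℝ, 0 < π →
      HasDerivAt V (-(N * Ψ π) / (π * (1 - θ)) * (1 - Ψ π ^ (1 - σ) / Φmax ^ (1 - σ))) π :=
    fun π hπ => funext hV ▸ ((hΨ' π hπ).mul_one_sub_rpow_div N (hΨpos π hπ).ne' (by linarith)
      (Real.rpow_pos_of_pos hΦ _).ne').congr_deriv (by field_simp)
  have hslope : ∀ π : ℝ, 0 < π → -(N * Ψ π) / (π * (1 - θ)) < 0 := fun π hπ =>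
    div_neg_of_neg_of_pos (neg_neg_of_pos (mul_pos hN (hΨpos π hπ))) (mul_pos hπ h1θ)
  have hsign : ∀ π : ℝ, 0 < π → Ψ π ≤ Φmax →
      -(N * Ψ π) / (π * (1 - θ)) * (1 - Ψ π ^ (1 - σ) / Φmax ^ (1 - σ)) ≤ 0 :=
    fun π hπ hle => mul_nonpos_of_nonpos_of_nonneg (hslope π hπ).le
      (one_sub_rpow_div_rpow_nonneg (hΨpos π hπ).le hle (by linarith))
  refine ⟨fun π hπ hle => ⟨hV' π hπ, hsign π hπ hle, fun hlt =>
    mul_neg_of_neg_of_pos (hslope π hπ) (one_sub_rpow_div_rpow_pos (hΨpos π hπ).le hlt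
      (by linarith))⟩, ?_⟩
  have hconv : Convex ℝ {π : ℝ | 0 < π ∧ Ψ π ≤ Φmax} :=
    (ordConnected_Ioi.sep_le_of_antitoneOn (funext hΨ ▸ antitoneOn_div_rpow (c := θ)
      hθ0.le (one_div_nonneg.2 h1θ.le)) Φmax).convex
  exact hconv.antitoneOn_of_hasDerivAt_nonpos (fun π hπ => hV' π hπ.1)
    (fun π hπ => hsign π hπ.1 hπ.2)

/-- Derivative and monotonicity of the volume-pricing per-cell total traffic
V(π) = N̂Ψ(π)(1 − Ψ(π)^{1-σ}/((2-σ)Φ_max^{1-σ})) with Ψ(π) = (θ/π)^{1/(1-θ)},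
in the regime Ψ(π) ≤ Φ_max. -/
theorem volume_pricing_traffic_deriv
    (θ σ Φmax N : ℝ)
    (hθ0 : 0 < θ) (hθ1 : θ < 1) (hσ0 : 0 < σ) (hσ1 : σ < 1)
    (hΦ : 0 < Φmax) (hN : 0 < N)
    (Ψ V : ℝ → ℝ)
    (hΨ : ∀ π : ℝ, Ψ π = (θ / π) ^ (1 / (1 - θ)))
    (hV : ∀ π : ℝ, V π = N * Ψ π * (1 - (Ψ π) ^ (1 - σ) / ((2 - σ) * Φmax ^ (1 - σ)))) :
    (∀ π : ℝ, 0 < π → Ψ π ≤ Φmax →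
      HasDerivAt V (-(N * Ψ π) / (π * (1 - θ)) * (1 - (Ψ π) ^ (1 - σ) / Φmax ^ (1 - σ))) π ∧
      -(N * Ψ π) / (π * (1 - θ)) * (1 - (Ψ π) ^ (1 - σ) / Φmax ^ (1 - σ)) ≤ 0 ∧
      (Ψ π < Φmax →
        -(N * Ψ π) / (π * (1 - θ)) * (1 - (Ψ π) ^ (1 - σ) / Φmax ^ (1 - σ)) < 0)) ∧
    AntitoneOn V {π : ℝ | 0 < π ∧ Ψ π ≤ Φmax} :=
  volume_pricing_traffic_deriv_general θ σ Φmax N hθ0 hθ1 hσ1 hΦ hN Ψ V hΨ hV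
end

section
/- Consider the volume-pricing revenue R(p) = (p − η) B(p) with B(p) = κ V(pκ) > 0 as above, for p > η ≥ 0. Then the ratio R'(p)/B(p) is strictly decreasing in p on the region where Ψ(pκ) ≤ Φ_max, satisfies R'(η)/B(η) = 1 > 0 and lim_{p→∞} R'(p)/B(p) = 1 − 1/(1−θ) < 0; therefore R'(p) = 0 has a unique solution p̂ ∈ (η, ∞) and R is unimodal on (η, ∞). -/
open Filter

private lemma aux_mul_lt (A1 A2 H1 H2 : ℝ) (hA1 : 0 ≤ A1) (hA : A1 < A2)
    (hH1 : 0 ≤ H1) (hH : H1 < H2) : A1 * H1 < A2 * H2 := by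
  nlinarith

private lemma aux_frac_lt (c u1 u2 : ℝ) (hc : 1 < c)
    (h21 : u2 < u1) (hD1 : 0 < 1 - u1 / c) (hD2 : 0 < 1 - u2 / c) :
    (1 - u1) / (1 - u1 / c) < (1 - u2) / (1 - u2 / c) := by
  have hc0 : (0:ℝ) < c := zero_lt_one.trans hc
  have e1 : (1 : ℝ) - u1 / c = (c - u1) / c := by field_simp
  have e2 : (1 : ℝ) - u2 / c = (c - u2) / c := by field_simp
  rw [div_lt_div_iff₀ hD1 hD2, e1, e2, ← mul_div_assoc, ← mul_div_assoc,
    div_lt_div_iff₀ hc0 hc0]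
  nlinarith [mul_pos (sub_pos.2 h21) (sub_pos.2 hc), hc0]

private lemma aux_key (p e N κ ψ x y q : ℝ) (hp : p ≠ 0) (he : e ≠ 0) (hψ : ψ ≠ 0)
    (hN : N ≠ 0) (hκ : κ ≠ 0) (hy : 1 - y ≠ 0) :
    (q * (-(N * κ * ψ) / (p * e) * (1 - x)) + κ * (N * ψ * (1 - y))) /
      (κ * (N * ψ * (1 - y))) = 1 - q / (p * e) * ((1 - x) / (1 - y)) := by
  field_simp
  ring

/-- Unimodality of the volume-pricing revenue R(p) = (p − η)B(p): the ratio
R'(p)/B(p) is strictly decreasing where Ψ(pκ) ≤ Φ_max, equals 1 at p = η,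
tends to 1 − 1/(1−θ) < 0 as p → ∞; hence R'(p) = 0 has a unique solution
p̂ ∈ (η, ∞), with R' positive below and negative above p̂. -/
theorem volume_pricing_revenue_unimodal
    (θ σ Φmax N κ η : ℝ)
    (hθ0 : 0 < θ) (hθ1 : θ < 1) (hσ0 : 0 < σ) (hσ1 : σ < 1)
    (hΦ : 0 < Φmax) (hN : 0 < N) (hκ0 : 0 < κ) (hκ1 : κ ≤ 1) (hη : 0 ≤ η)
    (Ψ V B B' R' : ℝ → ℝ)
    (hΨ : ∀ π : ℝ, Ψ π = (θ / π) ^ (1 / (1 - θ)))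
    (hV : ∀ π : ℝ, V π = N * Ψ π * (1 - (Ψ π) ^ (1 - σ) / ((2 - σ) * Φmax ^ (1 - σ))))
    (hB : ∀ p : ℝ, B p = κ * V (p * κ))
    (hB' : ∀ p : ℝ, B' p =
      -(N * κ * Ψ (p * κ)) / (p * (1 - θ)) * (1 - (Ψ (p * κ)) ^ (1 - σ) / Φmax ^ (1 - σ)))
    (hR' : ∀ p : ℝ, R' p = (p - η) * B' p + B p)
    (hBpos : ∀ p : ℝ, η ≤ p → 0 < B p) :
    StrictAntiOn (fun p : ℝ => R' p / B p) {p : ℝ | η ≤ p ∧ Ψ (p * κ) ≤ Φmax} ∧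
    R' η / B η = 1 ∧
    Filter.Tendsto (fun p : ℝ => R' p / B p) Filter.atTop (nhds (1 - 1 / (1 - θ))) ∧
    1 - 1 / (1 - θ) < 0 ∧
    (∃ phat : ℝ, η < phat ∧ R' phat = 0 ∧
      (∀ p ∈ Set.Ioo η phat, 0 < R' p) ∧
      (∀ p ∈ Set.Ioi phat, R' p < 0) ∧
      (∀ p ∈ Set.Ioi η, R' p = 0 → p = phat)) := by
  have hθ' : (0:ℝ) < 1 - θ := by linarith
  have hσ' : (0:ℝ) < 1 - σ := by linarith
  have hc : (1:ℝ) < 2 - σ := by linarith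
  have hF : (0:ℝ) < Φmax ^ (1 - σ) := Real.rpow_pos_of_pos hΦ _
  have he : (0:ℝ) < 1 / (1 - θ) := by positivity
  -- η must be positive, otherwise B 0 = 0 contradicts hBpos
  have hη0 : 0 < η := by
    rcases eq_or_lt_of_le hη with h0 | h0
    · exfalso
      have hb := hBpos 0 h0.ge
      have : B 0 = 0 := by
        rw [hB, hV, hΨ, zero_mul, div_zero, Real.zero_rpow he.ne']
        ring
      rw [this] at hb
      exact lt_irrefl 0 hb
    · exact h0
  have hψpos : ∀ p : ℝ, 0 < p → 0 < Ψ (p * κ) := by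
    intro p hp
    rw [hΨ]
    exact Real.rpow_pos_of_pos (by positivity) _
  have hψanti : ∀ p q : ℝ, 0 < p → p < q → Ψ (q * κ) < Ψ (p * κ) := by
    intro p q hp hpq
    rw [hΨ, hΨ]
    have hq0 : 0 < q := hp.trans hpq
    apply Real.rpow_lt_rpow (le_of_lt (div_pos hθ0 (mul_pos hq0 hκ0))) _ he
    exact div_lt_div_of_pos_left hθ0 (mul_pos hp hκ0) (by nlinarith)
  have hDpos : ∀ p : ℝ, η ≤ p →
      0 < 1 - Ψ (p * κ) ^ (1 - σ) / ((2 - σ) * Φmax ^ (1 - σ)) := by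
    intro p hp
    have hb := hBpos p hp
    rw [hB, hV] at hb
    have hψ := hψpos p (lt_of_lt_of_le hη0 hp)
    nlinarith [mul_pos (mul_pos hκ0 hN) hψ]
  -- the key formula for the ratio
  have key : ∀ p : ℝ, η ≤ p →
      R' p / B p = 1 - (p - η) / (p * (1 - θ)) *
        ((1 - Ψ (p * κ) ^ (1 - σ) / Φmax ^ (1 - σ)) /
          (1 - Ψ (p * κ) ^ (1 - σ) / ((2 - σ) * Φmax ^ (1 - σ)))) := by
    intro p hp
    have hp0 : 0 < p := lt_of_lt_of_le hη0 hp
    have hψ := hψpos p hp0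
    have hD := hDpos p hp
    rw [hR', hB', hB, hV]
    exact aux_key p (1 - θ) N κ (Ψ (p * κ)) _ _ (p - η) hp0.ne' hθ'.ne' hψ.ne'
      hN.ne' hκ0.ne' hD.ne' 
  -- value at η
  have hval : R' η / B η = 1 := by
    rw [hR']
    simp only [sub_self, zero_mul, zero_add]
    exact div_self (hBpos η le_rfl).ne'
  -- ratio exceeds 1 outside the region
  have hGgt : ∀ p : ℝ, η < p → Φmax < Ψ (p * κ) → 1 < R' p / B p := by
    intro p hp hΦψ
    have hp0 : 0 < p := hη0.trans hp
    have hD := hDpos p hp.le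
    rw [key p hp.le]
    have ha : Φmax ^ (1 - σ) < Ψ (p * κ) ^ (1 - σ) :=
      Real.rpow_lt_rpow hΦ.le hΦψ hσ'
    have hu : 1 < Ψ (p * κ) ^ (1 - σ) / Φmax ^ (1 - σ) := (one_lt_div hF).2 ha
    have hH : (1 - Ψ (p * κ) ^ (1 - σ) / Φmax ^ (1 - σ)) /
        (1 - Ψ (p * κ) ^ (1 - σ) / ((2 - σ) * Φmax ^ (1 - σ))) < 0 :=
      div_neg_of_neg_of_pos (by linarith) hD
    have hA : 0 < (p - η) / (p * (1 - θ)) := div_pos (by linarith) (by positivity)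
    have := mul_neg_of_pos_of_neg hA hH
    linarith
  -- strict decrease on the region
  have hgineq : ∀ p q : ℝ, η ≤ p → Ψ (p * κ) ≤ Φmax → p < q → Ψ (q * κ) ≤ Φmax →
      R' q / B q < R' p / B p := by
    intro p q hp hpΦ hpq hqΦ
    have hp0 : 0 < p := lt_of_lt_of_le hη0 hp
    have hq0 : 0 < q := hp0.trans hpq
    have hq : η ≤ q := hp.trans hpq.le
    rw [key p hp, key q hq]
    have ha21 : Ψ (q * κ) ^ (1 - σ) < Ψ (p * κ) ^ (1 - σ) :=
      Real.rpow_lt_rpow (hψpos q hq0).le (hψanti p q hp0 hpq) hσ'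
    have ha1F : Ψ (p * κ) ^ (1 - σ) ≤ Φmax ^ (1 - σ) :=
      Real.rpow_le_rpow (hψpos p hp0).le hpΦ hσ'.le
    have hD1 := hDpos p hp
    have hD2 := hDpos q hq
    have hrw : ∀ a : ℝ, a / ((2 - σ) * Φmax ^ (1 - σ)) = a / Φmax ^ (1 - σ) / (2 - σ) := by
      intro a; rw [div_div, mul_comm]
    simp only [hrw] at hD1 hD2 ⊢
    have hu21 : Ψ (q * κ) ^ (1 - σ) / Φmax ^ (1 - σ) < Ψ (p * κ) ^ (1 - σ) / Φmax ^ (1 - σ) :=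
      div_lt_div_of_pos_right ha21 hF
    have hHlt := aux_frac_lt (2 - σ) (Ψ (p * κ) ^ (1 - σ) / Φmax ^ (1 - σ))
      (Ψ (q * κ) ^ (1 - σ) / Φmax ^ (1 - σ)) hc hu21 hD1 hD2
    have hH1 : 0 ≤ (1 - Ψ (p * κ) ^ (1 - σ) / Φmax ^ (1 - σ)) /
        (1 - Ψ (p * κ) ^ (1 - σ) / Φmax ^ (1 - σ) / (2 - σ)) := by
      apply div_nonneg _ hD1.le
      have : Ψ (p * κ) ^ (1 - σ) / Φmax ^ (1 - σ) ≤ 1 := (div_le_one hF).2 ha1F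
      linarith
    have hA1 : 0 ≤ (p - η) / (p * (1 - θ)) := div_nonneg (by linarith) (by positivity)
    have hA12 : (p - η) / (p * (1 - θ)) < (q - η) / (q * (1 - θ)) := by
      rw [div_lt_div_iff₀ (by positivity) (by positivity)]
      nlinarith [mul_pos hθ' (mul_pos hη0 (sub_pos.2 hpq))]
    have := aux_mul_lt _ _ _ _ hA1 hA12 hH1 hHlt
    linarith
  -- the limit of the bare Ψ along atTop
  have hψlim : Tendsto (fun p : ℝ => Ψ (p * κ)) atTop (nhds 0) := by
    have hmul : Tendsto (fun p : ℝ => p * κ) atTop atTop :=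
      Tendsto.atTop_mul_const hκ0 tendsto_id
    have hbase : Tendsto (fun p : ℝ => θ / (p * κ)) atTop (nhds 0) :=
      Tendsto.const_div_atTop hmul θ
    have hcont : ContinuousAt (fun x : ℝ => x ^ (1 / (1 - θ))) 0 :=
      Real.continuousAt_rpow_const 0 _ (Or.inr he.le)
    have h := hcont.tendsto.comp hbase
    rw [Real.zero_rpow he.ne'] at h
    exact h.congr fun p => (hΨ (p * κ)).symm
  have halim : Tendsto (fun p : ℝ => Ψ (p * κ) ^ (1 - σ)) atTop (nhds 0) := by
    have hcont : ContinuousAt (fun x : ℝ => x ^ (1 - σ)) 0 :=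
      Real.continuousAt_rpow_const 0 _ (Or.inr hσ'.le)
    have h := hcont.tendsto.comp hψlim
    rw [Real.zero_rpow hσ'.ne'] at h
    exact h
  -- the tendsto statement
  have hTend : Tendsto (fun p : ℝ => R' p / B p) atTop (nhds (1 - 1 / (1 - θ))) := by
    have hA : Tendsto (fun p : ℝ => (p - η) / (p * (1 - θ))) atTop (nhds (1 / (1 - θ))) := by
      have h1 : Tendsto (fun p : ℝ => (1 - η / p) * (1 / (1 - θ))) atTop
          (nhds ((1 - 0) * (1 / (1 - θ)))) :=
        ((tendsto_const_nhds.sub (Filter.Tendsto.const_div_atTop tendsto_id η)).mul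
          tendsto_const_nhds)
      have h2 : ((1:ℝ) - 0) * (1 / (1 - θ)) = 1 / (1 - θ) := by ring
      rw [h2] at h1
      apply h1.congr'
      filter_upwards [eventually_gt_atTop (0:ℝ)] with p hp
      field_simp
    have hH : Tendsto (fun p : ℝ => (1 - Ψ (p * κ) ^ (1 - σ) / Φmax ^ (1 - σ)) /
        (1 - Ψ (p * κ) ^ (1 - σ) / ((2 - σ) * Φmax ^ (1 - σ)))) atTop (nhds 1) := by
      have hnum : Tendsto (fun p : ℝ => 1 - Ψ (p * κ) ^ (1 - σ) / Φmax ^ (1 - σ)) atTop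
          (nhds (1 - 0 / Φmax ^ (1 - σ))) :=
        tendsto_const_nhds.sub (halim.div_const _)
      have hden : Tendsto (fun p : ℝ =>
          1 - Ψ (p * κ) ^ (1 - σ) / ((2 - σ) * Φmax ^ (1 - σ))) atTop
          (nhds (1 - 0 / ((2 - σ) * Φmax ^ (1 - σ)))) :=
        tendsto_const_nhds.sub (halim.div_const _)
      have h := hnum.div hden (by norm_num)
      norm_num at h
      exact h
    have h : Tendsto (fun p : ℝ => 1 - (p - η) / (p * (1 - θ)) *
        ((1 - Ψ (p * κ) ^ (1 - σ) / Φmax ^ (1 - σ)) /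
          (1 - Ψ (p * κ) ^ (1 - σ) / ((2 - σ) * Φmax ^ (1 - σ))))) atTop
        (nhds (1 - 1 / (1 - θ) * 1)) := tendsto_const_nhds.sub (hA.mul hH)
    rw [mul_one] at h
    apply h.congr'
    filter_upwards [eventually_ge_atTop η] with p hp
    exact (key p hp).symm
  have hneglim : 1 - 1 / (1 - θ) < 0 := by
    have : (1:ℝ) < 1 / (1 - θ) := by
      rw [lt_div_iff₀ hθ']
      linarith
    linarith
  refine ⟨?_, hval, hTend, hneglim, ?_⟩
  · intro p hp q hq hpq
    exact hgineq p q hp.1 hp.2 hpq hq.2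
  -- existence of the root
  · have hev1 : ∀ᶠ p in atTop, R' p / B p < 0 := hTend.eventually_lt_const hneglim
    have hev2 : ∀ᶠ p in atTop, Ψ (p * κ) < Φmax := hψlim.eventually_lt_const hΦ
    obtain ⟨P, hP1, hP2, hP3⟩ :=
      ((hev1.and (hev2.and (eventually_ge_atTop (η + 1)))).exists)
    have hPη : η < P := by linarith
    -- continuity of the ratio on [η, P]
    have hcont : ContinuousOn (fun p : ℝ => R' p / B p) (Set.Icc η P) := by
      have hne : ∀ x ∈ Set.Icc η P, x * κ ≠ 0 := by
        intro x hx
        have : 0 < x := hη0.trans_le hx.1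
        positivity
      have hψc : ContinuousOn (fun p : ℝ => Ψ (p * κ)) (Set.Icc η P) := by
        have hbase : ContinuousOn (fun p : ℝ => θ / (p * κ)) (Set.Icc η P) :=
          continuousOn_const.div ((continuous_id.mul continuous_const).continuousOn) hne
        have := hbase.rpow_const (fun x _ => Or.inr he.le)
        exact this.congr fun p _ => hΨ (p * κ)
      have hac : ContinuousOn (fun p : ℝ => Ψ (p * κ) ^ (1 - σ)) (Set.Icc η P) :=
        hψc.rpow_const fun x _ => Or.inr hσ'.le
      have hHc : ContinuousOn (fun p : ℝ =>
          (1 - Ψ (p * κ) ^ (1 - σ) / Φmax ^ (1 - σ)) /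
          (1 - Ψ (p * κ) ^ (1 - σ) / ((2 - σ) * Φmax ^ (1 - σ)))) (Set.Icc η P) := by
        apply ContinuousOn.div
        · exact continuousOn_const.sub (hac.div_const _)
        · exact continuousOn_const.sub (hac.div_const _)
        · exact fun x hx => (hDpos x hx.1).ne'
      have hAc : ContinuousOn (fun p : ℝ => (p - η) / (p * (1 - θ))) (Set.Icc η P) := by
        apply ContinuousOn.div
        · exact (continuous_id.sub continuous_const).continuousOn
        · exact (continuous_id.mul continuous_const).continuousOn
        · intro x hx
          have : 0 < x := hη0.trans_le hx.1
          positivity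
      have hGc : ContinuousOn (fun p : ℝ => 1 - (p - η) / (p * (1 - θ)) *
          ((1 - Ψ (p * κ) ^ (1 - σ) / Φmax ^ (1 - σ)) /
            (1 - Ψ (p * κ) ^ (1 - σ) / ((2 - σ) * Φmax ^ (1 - σ))))) (Set.Icc η P) :=
        continuousOn_const.sub (hAc.mul hHc)
      exact hGc.congr fun p hp => key p hp.1
    have h0mem : (0:ℝ) ∈ Set.Icc (R' P / B P) (R' η / B η) := by
      constructor
      · exact hP1.le
      · rw [hval]; norm_num
    obtain ⟨phat, hphatmem, hphat0⟩ := intermediate_value_Icc' hPη.le hcont h0mem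
    have hphat0' : R' phat / B phat = 0 := hphat0
    have hphatη : η < phat := by
      rcases eq_or_lt_of_le hphatmem.1 with h | h
      · exfalso
        rw [← h, hval] at hphat0'
        norm_num at hphat0'
      · exact h
    have hBph := hBpos phat hphatmem.1
    have hRph : R' phat = 0 := by
      rcases div_eq_zero_iff.1 hphat0' with h | h
      · exact h
      · exact absurd h hBph.ne'
    have hphatS : Ψ (phat * κ) ≤ Φmax := by
      by_contra hcon
      push_neg at hcon
      have := hGgt phat hphatη hcon
      rw [hphat0'] at this
      norm_num at this
    have hpos : ∀ p ∈ Set.Ioo η phat, 0 < R' p := by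
      rintro p ⟨hp1, hp2⟩
      have hBp := hBpos p hp1.le
      have hgpos : 0 < R' p / B p := by
        rcases le_or_gt (Ψ (p * κ)) Φmax with h | h
        · have := hgineq p phat hp1.le h hp2 hphatS
          rw [hphat0'] at this
          linarith
        · linarith [hGgt p hp1 h]
      have := mul_pos hgpos hBp
      rwa [div_mul_cancel₀ _ hBp.ne'] at this
    have hneg : ∀ p ∈ Set.Ioi phat, R' p < 0 := by
      intro p hp
      have hp' : phat < p := hp
      have hpη : η < p := hphatη.trans hp'
      have hS : Ψ (p * κ) ≤ Φmax :=
        le_of_lt (lt_of_lt_of_le (hψanti phat p (hη0.trans hphatη) hp') hphatS)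
      have h := hgineq phat p hphatη.le hphatS hp' hS
      rw [hphat0'] at h
      have hBp := hBpos p hpη.le
      have := mul_neg_of_neg_of_pos h hBp
      rwa [div_mul_cancel₀ _ hBp.ne'] at this
    refine ⟨phat, hphatη, hRph, hpos, hneg, ?_⟩
    intro p hp hp0
    rcases lt_trichotomy p phat with h | h | h
    · exact absurd hp0 (hpos p ⟨hp, h⟩).ne'
    · exact h
    · exact absurd hp0 (hneg p h).ne
end

section
/- In volume pricing, scaling the offloading ratio κ by ρ ∈ (0,1) (κ_new = ρκ) and the price by 1/ρ (p_new = p/ρ) leaves every user's net-utility function, and hence every user's optimal traffic x⋆, unchanged, while the 3G traffic scales by ρ: ∑_t y_new(t) = ρ ∑_t y(t). Consequently R(p_new, κ_new) = (p − ρη) ∑_t Y(t; p, κ) > (p − η) ∑_t Y(t; p, κ) = R(p, κ) whenever R(p,κ) > 0 and η > 0. -/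
/-! Multiplying the price by `1/ρ` and the offloading ratio by `ρ` leaves the product `p κ`, and
hence every user's net utility and optimal traffic `x⋆`, unchanged, while the 3G traffic
`κ ∑ x⋆` shrinks by the factor `ρ`. The new revenue is therefore `(p/ρ - η) ρ S = (p - ρη) S`,
and since `ρη < η` it exceeds the old revenue `(p - η) S`. -/

section VolumePricing

variable {K : Type*} [Field K] (p κ η ρ S : K)

theorem div_mul_mul_cancel_of_ne_zero (hρ : ρ ≠ 0) : p / ρ * (ρ * κ) = p * κ := by
  field_simp

theorem div_sub_mul_mul_eq (hρ : ρ ≠ 0) : (p / ρ - η) * (ρ * S) = (p - ρ * η) * S := by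
  field_simp

end VolumePricing

theorem sub_mul_lt_sub_mul_of_lt_one {K : Type*} [Field K] [LinearOrder K] [IsStrictOrderedRing K]
    {p η ρ S : K} (hρ1 : ρ < 1) (hη : 0 < η) (hS : 0 < S) :
    (p - η) * S < (p - ρ * η) * S := by
  have hρη : ρ * η < η := mul_lt_of_lt_one_left hη hρ1
  exact mul_lt_mul_of_pos_right (by linarith) hS

theorem volume_pricing_offloading_increases_revenue_general
    (θ p κ η ρ : ℝ)
    (hρ0 : 0 < ρ) (hρ1 : ρ < 1) (hη : 0 < η) :
    (∀ (T : Finset ℕ) (w x : ℕ → ℝ),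
      (∑ t ∈ T, (w t) ^ (1 - θ) * (x t) ^ θ) - (p / ρ) * (ρ * κ) * ∑ t ∈ T, x t
        = (∑ t ∈ T, (w t) ^ (1 - θ) * (x t) ^ θ) - p * κ * ∑ t ∈ T, x t) ∧
    (∀ (T : Finset ℕ) (x : ℕ → ℝ),
      (ρ * κ) * ∑ t ∈ T, x t = ρ * (κ * ∑ t ∈ T, x t)) ∧
    (∀ S : ℝ, 0 < S → (p - η) * S > 0 →
      (p / ρ - η) * (ρ * S) = (p - ρ * η) * S ∧
      (p - η) * S < (p / ρ - η) * (ρ * S)) := by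
  have hρ : ρ ≠ 0 := hρ0.ne'
  refine ⟨fun T w x => ?_, fun T x => mul_assoc ρ κ _, fun S hS _ => ?_⟩
  · rw [div_mul_mul_cancel_of_ne_zero p κ ρ hρ]
  · have hrevenue := div_sub_mul_mul_eq p η ρ S hρ
    exact ⟨hrevenue, hrevenue ▸ sub_mul_lt_sub_mul_of_lt_one hρ1 hη hS⟩

/-- Volume-pricing scaling argument: replacing (p, κ) by (p/ρ, ρκ) with
ρ ∈ (0,1) leaves every user's net-utility (hence optimal traffic) unchanged,
scales the 3G traffic by ρ, and strictly increases the revenue whenever the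
original revenue is positive and η > 0. -/
theorem volume_pricing_offloading_increases_revenue
    (θ p κ η ρ : ℝ) (hθ0 : 0 < θ) (hθ1 : θ < 1)
    (hρ0 : 0 < ρ) (hρ1 : ρ < 1) (hκ : 0 < κ) (hp : 0 < p) (hη : 0 < η) :
    (∀ (T : Finset ℕ) (w x : ℕ → ℝ),
      (∑ t ∈ T, (w t) ^ (1 - θ) * (x t) ^ θ) - (p / ρ) * (ρ * κ) * ∑ t ∈ T, x t
        = (∑ t ∈ T, (w t) ^ (1 - θ) * (x t) ^ θ) - p * κ * ∑ t ∈ T, x t) ∧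
    (∀ (T : Finset ℕ) (x : ℕ → ℝ),
      (ρ * κ) * ∑ t ∈ T, x t = ρ * (κ * ∑ t ∈ T, x t)) ∧
    (∀ S : ℝ, 0 < S → (p - η) * S > 0 →
      (p / ρ - η) * (ρ * S) = (p - ρ * η) * S ∧
      (p - η) * S < (p / ρ - η) * (ρ * S)) :=
  volume_pricing_offloading_increases_revenue_general θ p κ η ρ hρ0 hρ1 hη
end
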